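/- For the frame bundle O(S^{2n}_θ) ⊂ O(SO_θ(2n+1,ℝ)) with the equivariant splitting ρ(T_J) := Σ_I u_{I'} L_{IJ}, the horizontal lifts satisfy [ρ(T_I), ρ(T_J)] = L_{IJ}, and consequently the curvature on the generators is Ω(T_I, T_J) = −ω(L_{IJ}) = −Y_{IJ}, where Y_{IJ} := L_{IJ} − ρ(L^π_{IJ}) are the generators of the vertical (gauge) derivations. -/
import Mathlib


/-!
STATEMENT 14: for the frame bundle `O(S^{2n}_θ) ⊂ O(SO_θ(2n+1,ℝ))` with the
equivariant splitting `ρ(T_J) := Σ_I u_{I'} L_{IJ}` (`u_I := n_{I0}`), the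
horizontal lifts satisfy `[ρ(T_I), ρ(T_J)] = L_{IJ}`, and consequently the
curvature on the generators is `Ω(T_I, T_J) = −ω(L_{IJ}) = −Y_{IJ}`, where
`Y_{IJ} := L_{IJ} − ρ(L^π_{IJ})` are the generators of the vertical (gauge)
derivations, with `ρ(L^π_{IJ}) = u_I ρ(T_J) − λ_{IJ} u_J ρ(T_I)`.

`O(SO_θ(2n+1,ℝ))` is modelled as a bigraded `ℂ`-algebra with generators
`n_{IJ}` (orthogonality and commutation relations as hypotheses; the sphere
generators are `u_I := n_{I z0}`, `z0` the fixed index of the involution); the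
equivariant derivations `L_{IJ}` are braided derivations with
`L_{IJ}(n_{ST}) = δ_{JS'} n_{IT} − λ_{IJ} δ_{I'S} n_{JT}`.  The curvature is
`Ω(X,X') = ρ([X,X']) − ⟦ρ,ρ⟧(X,X')`; for the equivariant splitting `ρ`,
`⟦ρ,ρ⟧(T_I,T_J)` is the braided commutator
`ρ(T_I)∘ρ(T_J) − λ_{IJ} ρ(T_J)∘ρ(T_I)`, while
`ρ([T_I,T_J]) = ρ(u_I T_J − λ_{IJ} u_J T_I) = u_I ρ(T_J) − λ_{IJ} u_J ρ(T_I)`.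
-/

noncomputable section

open scoped BigOperators

namespace Statement14

/-- `λ_{IJ} = exp(−2πi θ_{IJ})`. -/
def lam {I : Type*} (θm : I → I → ℝ) (i j : I) : ℂ :=
  Complex.exp (-(2 * (Real.pi : ℂ) * Complex.I) * (θm i j : ℂ))

/-- index set `{1, …, 2n+1}` -/
abbrev Idx (n : ℕ) := Fin (2 * n + 1)

/-- the weight lattice of the `n`-torus -/
abbrev W (n : ℕ) := Idx n → ℤ

/-- the torus weight attached to the index `I`: `e_I − e_{I'}`. -/
def wt {n : ℕ} (inv : Idx n → Idx n) (i : Idx n) : W n :=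
  fun j => (if j = i then 1 else 0) - (if j = inv i then 1 else 0)

/-- the deformation parameters extended biadditively to the weight lattice -/
def pairing {n : ℕ} (θm : Idx n → Idx n → ℝ) (p q : W n) : ℝ :=
  ∑ i, ∑ j, (p i : ℝ) * (q j : ℝ) * θm i j

/-- the braiding factor between homogeneous elements of bidegrees `p` and `q`
(the left and right torus actions braid with opposite signs); on generators,
`facSO (wt I, wt J) (wt K, wt L) = λ_{IK} λ_{LJ}`. -/
def facSO {n : ℕ} (θm : Idx n → Idx n → ℝ) (p q : W n × W n) : ℂ :=
  Complex.exp (-((Real.pi : ℂ) * Complex.I) *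
    (((pairing θm p.1 q.1 : ℝ) : ℂ) - ((pairing θm p.2 q.2 : ℝ) : ℂ)) / 2)

section Arith
variable {n : ℕ} (inv : Idx n → Idx n) (z0 : Idx n) (θm : Idx n → Idx n → ℝ)

theorem lam_mul_symm (hθ₁ : ∀ I J, θm I J = - θm J I) (I J : Idx n) :
    lam θm I J * lam θm J I = 1 := by
  rw [lam, lam, ← Complex.exp_add, ← Complex.exp_zero]
  congr 1
  have : θm J I = - θm I J := by rw [hθ₁ I J]; ring
  rw [this]; push_cast; ring

theorem lam_inv_right (hθ₁ : ∀ I J, θm I J = - θm J I)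
    (hθ₂ : ∀ I J, θm I (inv J) = - θm I J) (I J : Idx n) :
    lam θm J (inv I) = lam θm I J := by
  rw [lam, lam, hθ₂, hθ₁ J I]; push_cast; ring_nf

theorem lam_inv_left (hθ₁ : ∀ I J, θm I J = - θm J I)
    (hθ₂ : ∀ I J, θm I (inv J) = - θm I J) (I J : Idx n) :
    lam θm (inv I) J = lam θm J I := by
  have h : θm (inv I) J = θm J I := by
    rw [hθ₁ (inv I) J, hθ₂ J I]; ring
  rw [lam, lam, h]

theorem lam_self (hθ₁ : ∀ I J, θm I J = - θm J I) (I : Idx n) :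
    lam θm I I = 1 := by
  have h : θm I I = 0 := by have := hθ₁ I I; linarith
  rw [lam, h]; push_cast; simp

theorem lam_z0_right (hθ₂ : ∀ I J, θm I (inv J) = - θm I J) (hz0 : inv z0 = z0) (T : Idx n) :
    lam θm T z0 = 1 := by
  have h : θm T z0 = 0 := by
    have := hθ₂ T z0; rw [hz0] at this; linarith
  rw [lam, h]; push_cast; simp

theorem wt_inv_inv (hinv : ∀ I, inv (inv I) = I) (K : Idx n) :
    wt inv (inv K) = - wt inv K := by
  funext j; simp only [wt, hinv, Pi.neg_apply]; ring

theorem wt_z0 (hz0 : inv z0 = z0) : wt inv z0 = 0 := by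
  funext j; simp only [wt, hz0, Pi.zero_apply]; ring

theorem pairing_add_left (p p' q : W n) :
    pairing θm (p + p') q = pairing θm p q + pairing θm p' q := by
  simp only [pairing, Pi.add_apply, ← Finset.sum_add_distrib]
  refine Finset.sum_congr rfl fun i _ => Finset.sum_congr rfl fun j _ => ?_
  push_cast; ring

theorem pairing_add_right (p q q' : W n) :
    pairing θm p (q + q') = pairing θm p q + pairing θm p q' := by
  simp only [pairing, Pi.add_apply, ← Finset.sum_add_distrib]
  refine Finset.sum_congr rfl fun i _ => Finset.sum_congr rfl fun j _ => ?_
  push_cast; ring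

theorem pairing_zero_left (q : W n) : pairing θm 0 q = 0 := by simp [pairing]

theorem pairing_zero_right (p : W n) : pairing θm p 0 = 0 := by simp [pairing]

theorem facSO_add_left (p p' q : W n × W n) :
    facSO θm (p + p') q = facSO θm p q * facSO θm p' q := by
  rw [facSO, facSO, facSO, ← Complex.exp_add]
  congr 1
  simp only [Prod.fst_add, Prod.snd_add, pairing_add_left]
  push_cast; ring

theorem facSO_add_right (p q q' : W n × W n) :
    facSO θm p (q + q') = facSO θm p q * facSO θm p q' := by
  rw [facSO, facSO, facSO, ← Complex.exp_add]
  congr 1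
  simp only [Prod.fst_add, Prod.snd_add, pairing_add_right]
  push_cast; ring

theorem facSO_zero_right (p : W n × W n) : facSO θm p 0 = 1 := by
  rw [facSO]; simp [pairing_zero_right]

theorem pairing_wt (hinv : ∀ I, inv (inv I) = I)
    (hθ₁ : ∀ I J, θm I J = - θm J I)
    (hθ₂ : ∀ I J, θm I (inv J) = - θm I J) (I J : Idx n) :
    pairing θm (wt inv I) (wt inv J) = 4 * θm I J := by
  have e1 : θm (inv I) (inv J) = θm I J := by
    rw [hθ₂ (inv I) J, hθ₁ (inv I) J, hθ₂ J I, hθ₁ J I]; ring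
  have e2 : θm (inv I) J = - θm I J := by
    rw [hθ₁ (inv I) J, hθ₂ J I, hθ₁ J I]; ring
  have e3 : θm I (inv J) = - θm I J := hθ₂ I J
  have hsum : ∀ i : Idx n, ∑ j, (wt inv I i : ℝ) * (wt inv J j : ℝ) * θm i j
      = (wt inv I i : ℝ) * (θm i J - θm i (inv J)) := by
    intro i
    have h : ∀ j : Idx n, (wt inv I i : ℝ) * (wt inv J j : ℝ) * θm i j
        = (wt inv I i : ℝ) * ((if j = J then θm i j else 0) - (if j = inv J then θm i j else 0)) := by
      intro j; simp only [wt]; push_cast; split_ifs <;> ring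
    rw [Finset.sum_congr rfl fun j _ => h j, ← Finset.mul_sum, Finset.sum_sub_distrib]
    simp [Finset.sum_ite_eq']
  rw [pairing, Finset.sum_congr rfl fun i _ => hsum i]
  have h : ∀ i : Idx n, (wt inv I i : ℝ) * (θm i J - θm i (inv J))
      = ((if i = I then (θm i J - θm i (inv J)) else 0)
        - (if i = inv I then (θm i J - θm i (inv J)) else 0)) := by
    intro i; simp only [wt]; push_cast; split_ifs <;> ring
  rw [Finset.sum_congr rfl fun i _ => h i, Finset.sum_sub_distrib]
  simp only [Finset.sum_ite_eq', Finset.mem_univ, if_true]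
  rw [e1, e2, e3]; ring

theorem facSO_wt (hinv : ∀ I, inv (inv I) = I)
    (hθ₁ : ∀ I J, θm I J = - θm J I)
    (hθ₂ : ∀ I J, θm I (inv J) = - θm I J) (I S : Idx n) (q : W n) :
    facSO θm (wt inv I, 0) (wt inv S, q) = lam θm I S := by
  rw [facSO, lam]
  congr 1
  simp only [pairing_zero_left, pairing_wt inv θm hinv hθ₁ hθ₂]
  push_cast; ring

end Arith

/-- monomials in the generators, together with their bidegree -/
inductive Mon {n : ℕ} {A : Type*} [Ring A] (inv : Idx n → Idx n)
    (nm : Idx n → Idx n → A) : (W n × W n) → A → Prop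
  | one : Mon inv nm 0 1
  | gen (S T : Idx n) : Mon inv nm (wt inv S, wt inv T) (nm S T)
  | mul {m m' : W n × W n} {x y : A} :
      Mon inv nm m x → Mon inv nm m' y → Mon inv nm (m + m') (x * y)

theorem frame_bundle_splitting_curvature
    {n : ℕ}
    (A : Type*) [Ring A] [Algebra ℂ A]
    (inv : Idx n → Idx n) (z0 : Idx n)
    (hinv : ∀ I, inv (inv I) = I) (hz0 : inv z0 = z0)
    (θm : Idx n → Idx n → ℝ)
    (hθ₁ : ∀ I J, θm I J = - θm J I)
    (hθ₂ : ∀ I J, θm I (inv J) = - θm I J)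
    (𝒜 : W n × W n → Submodule ℂ A) [GradedAlgebra 𝒜]
    -- the generators `n_{IJ}` of `O(SO_θ(2n+1,ℝ))`
    (nm : Idx n → Idx n → A)
    (hn : ∀ I J, nm I J ∈ 𝒜 (wt inv I, wt inv J))
    (hgen : Algebra.adjoin ℂ {x | ∃ I J, x = nm I J} = ⊤)
    (horth₁ : ∀ I J, ∑ K, nm (inv K) (inv I) * nm K J = if I = J then 1 else 0)
    (horth₂ : ∀ I J, ∑ K, nm I K * nm (inv J) (inv K) = if I = J then 1 else 0)
    (hcomm : ∀ I J K L, nm I J * nm K L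
      = (lam θm I K * lam θm L J) • (nm K L * nm I J))
    -- the equivariant braided derivations `L_{IJ}`
    (L : Idx n → Idx n → Module.End ℂ A)
    (hanti : ∀ I J, L I J = -(lam θm I J) • L J I)
    (hLval : ∀ I J S T, L I J (nm S T)
      = (if J = inv S then (1:ℂ) else 0) • nm I T
        - lam θm I J • ((if S = inv I then (1:ℂ) else 0) • nm J T))
    (hLeib : ∀ I J (m : W n × W n) (x y : A), x ∈ 𝒜 m →
      L I J (x * y)
        = L I J x * y + facSO θm (wt inv I + wt inv J, 0) m • (x * L I J y))
    -- the sphere generators `u_I := n_{I z0}` and the equivariant splitting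
    -- `ρ(T_J) := Σ_I u_{I'} L_{IJ}`
    (u : Idx n → A) (hu : ∀ I, u I = nm I z0)
    (rhoT : Idx n → Module.End ℂ A)
    (hrho : ∀ J, rhoT J = ∑ I, (LinearMap.mulLeft ℂ (u (inv I))) ∘ₗ L I J)
    -- the vertical generators `Y_{IJ} := L_{IJ} − ρ(L^π_{IJ})`
    (Y : Idx n → Idx n → Module.End ℂ A)
    (hY : ∀ I J, Y I J = L I J
      - ((LinearMap.mulLeft ℂ (u I)) ∘ₗ rhoT J
          - lam θm I J • ((LinearMap.mulLeft ℂ (u J)) ∘ₗ rhoT I))) :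
    -- (i) `[ρ(T_I), ρ(T_J)] = L_{IJ}`
    (∀ I J, rhoT I ∘ₗ rhoT J - lam θm I J • (rhoT J ∘ₗ rhoT I) = L I J) ∧
    -- (ii) the curvature `Ω(T_I,T_J) = ρ([T_I,T_J]) − ⟦ρ,ρ⟧(T_I,T_J)`
    --      equals `−ω(L_{IJ}) = −Y_{IJ}`
    (∀ I J,
      ((LinearMap.mulLeft ℂ (u I)) ∘ₗ rhoT J
          - lam θm I J • ((LinearMap.mulLeft ℂ (u J)) ∘ₗ rhoT I))
        - (rhoT I ∘ₗ rhoT J - lam θm I J • (rhoT J ∘ₗ rhoT I))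
      = - Y I J) := by
  classical
  -- the "good" submodules
  let G : (W n × W n) → Submodule ℂ A := fun m =>
    { carrier := {x | x ∈ 𝒜 m ∧ ∀ K, nm K z0 * x
        = facSO θm (wt inv K, 0) m • (x * nm K z0)},
      add_mem' := by
        rintro x y ⟨hx1, hx2⟩ ⟨hy1, hy2⟩
        refine ⟨add_mem hx1 hy1, fun K => ?_⟩
        rw [mul_add, hx2 K, hy2 K, add_mul, smul_add]
      zero_mem' := by
        refine ⟨zero_mem _, fun K => ?_⟩
        simp
      smul_mem' := by
        rintro c x ⟨hx1, hx2⟩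
        refine ⟨Submodule.smul_mem _ _ hx1, fun K => ?_⟩
        rw [mul_smul_comm, hx2 K, smul_mul_assoc, smul_comm] }
  have hGmem : ∀ (m : W n × W n) (x : A), x ∈ G m ↔
      (x ∈ 𝒜 m ∧ ∀ K, nm K z0 * x = facSO θm (wt inv K, 0) m • (x * nm K z0)) :=
    fun m x => Iff.rfl
  have hGdegeq : ∀ {m m' : W n × W n}, m = m' → G m = G m' := by
    intro m m' h; rw [h]
  have hGmul : ∀ {m m' : W n × W n} {x y : A}, x ∈ G m → y ∈ G m' →
      x * y ∈ G (m + m') := by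
    intro m m' x y hx hy
    rw [hGmem] at hx hy ⊢
    refine ⟨SetLike.mul_mem_graded hx.1 hy.1, fun K => ?_⟩
    rw [← mul_assoc, hx.2 K, smul_mul_assoc, mul_assoc, hy.2 K,
      mul_smul_comm, smul_smul, facSO_add_right, mul_assoc]
  have hGgen : ∀ S T, nm S T ∈ G (wt inv S, wt inv T) := by
    intro S T
    rw [hGmem]
    refine ⟨hn S T, fun K => ?_⟩
    rw [hcomm K z0 S T, lam_z0_right inv z0 θm hθ₂ hz0,
      facSO_wt inv θm hinv hθ₁ hθ₂, mul_one]
  have hG1 : (1:A) ∈ G 0 := by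
    rw [hGmem]
    refine ⟨SetLike.one_mem_graded 𝒜, fun K => ?_⟩
    rw [mul_one, one_mul, facSO_zero_right, one_smul]
  have hMonG : ∀ {m : W n × W n} {x : A}, Mon inv nm m x → x ∈ G m := by
    intro m x h
    induction h with
    | one => exact hG1
    | gen S T => exact hGgen S T
    | mul hx hy ihx ihy => exact hGmul ihx ihy
  -- basic facts about `L` and `rhoT`
  have hL1 : ∀ K J, L K J (1:A) = 0 := by
    intro K J
    have h := hLeib K J 0 1 1 (SetLike.one_mem_graded 𝒜)
    simp only [mul_one, one_mul, facSO_zero_right, one_smul] at h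
    exact (left_eq_add.mp h)
  have hrho_apply : ∀ (J : Idx n) (x : A),
      rhoT J x = ∑ K, nm (inv K) z0 * L K J x := by
    intro J x
    rw [hrho]
    simp [LinearMap.sum_apply, LinearMap.comp_apply, LinearMap.mulLeft_apply, hu]
  have hρ1 : ∀ J, rhoT J (1:A) = 0 := by
    intro J; rw [hrho_apply]; simp [hL1]
  -- `L` maps monomials into the good submodules
  have hLG : ∀ {m : W n × W n} {x : A}, Mon inv nm m x →
      ∀ K J, L K J x ∈ G (m + (wt inv K + wt inv J, 0)) := by
    intro m x h
    induction h with
    | one => intro K J; rw [hL1]; exact zero_mem _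
    | gen S T =>
      intro K J
      rw [hLval]
      refine sub_mem ?_ (Submodule.smul_mem _ _ ?_)
      · by_cases hJS : J = inv S
        · rw [if_pos hJS]
          have hdeg : ((wt inv S, wt inv T) : W n × W n) + (wt inv K + wt inv J, 0)
              = (wt inv K, wt inv T) := by
            refine Prod.ext_iff.mpr ⟨?_, ?_⟩
            · simp only [Prod.fst_add]
              rw [hJS, wt_inv_inv inv hinv]; abel
            · simp only [Prod.snd_add]; abel
          rw [hGdegeq hdeg]
          exact Submodule.smul_mem _ _ (hGgen K T)
        · rw [if_neg hJS, zero_smul]; exact zero_mem _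
      · by_cases hSK : S = inv K
        · rw [if_pos hSK]
          have hdeg : ((wt inv S, wt inv T) : W n × W n) + (wt inv K + wt inv J, 0)
              = (wt inv J, wt inv T) := by
            refine Prod.ext_iff.mpr ⟨?_, ?_⟩
            · simp only [Prod.fst_add]
              rw [hSK, wt_inv_inv inv hinv]; abel
            · simp only [Prod.snd_add]; abel
          rw [hGdegeq hdeg]
          exact Submodule.smul_mem _ _ (hGgen J T)
        · rw [if_neg hSK, zero_smul]; exact zero_mem _
    | mul hx hy ihx ihy =>
      intro K J
      rename_i m₁ m₂ x₁ y₁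
      rw [hLeib K J m₁ x₁ y₁ ((hGmem _ _).mp (hMonG hx)).1]
      refine add_mem ?_ (Submodule.smul_mem _ _ ?_)
      · have h1 := hGmul (ihx K J) (hMonG hy)
        have hdeg : (m₁ + (wt inv K + wt inv J, 0)) + m₂
            = (m₁ + m₂) + (wt inv K + wt inv J, 0) := by abel
        rwa [hGdegeq hdeg] at h1
      · have h1 := hGmul (hMonG hx) (ihy K J)
        have hdeg : m₁ + (m₂ + (wt inv K + wt inv J, 0))
            = (m₁ + m₂) + (wt inv K + wt inv J, 0) := by abel
        rwa [hGdegeq hdeg] at h1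
  -- `rhoT` maps monomials into the good submodules
  have hρG : ∀ {m : W n × W n} {x : A}, Mon inv nm m x →
      ∀ J, rhoT J x ∈ G (m + (wt inv J, 0)) := by
    intro m x h J
    rw [hrho_apply]
    refine Submodule.sum_mem _ fun K _ => ?_
    have h1 : nm (inv K) z0 ∈ G (wt inv (inv K), wt inv z0) := hGgen (inv K) z0
    have h2 := hGmul h1 (hLG h K J)
    have hdeg : ((wt inv (inv K), wt inv z0) : W n × W n)
        + (m + (wt inv K + wt inv J, 0)) = m + (wt inv J, 0) := by
      refine Prod.ext_iff.mpr ⟨?_, ?_⟩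
      · simp only [Prod.fst_add]
        rw [wt_inv_inv inv hinv]; abel
      · simp only [Prod.snd_add]
        rw [wt_z0 inv z0 hz0]; abel
    rwa [hGdegeq hdeg] at h2
  -- braided Leibniz rule for rhoT
  have hρLeib : ∀ (J : Idx n) (m : W n × W n) (x : A), x ∈ G m → ∀ y : A,
      rhoT J (x * y) = rhoT J x * y
        + facSO θm (wt inv J, 0) m • (x * rhoT J y) := by
    intro J m x hx y
    obtain ⟨hx1, hx2⟩ := (hGmem m x).mp hx
    rw [hrho_apply, hrho_apply, hrho_apply]
    have hterm : ∀ K : Idx n, nm (inv K) z0 * L K J (x * y)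
        = (nm (inv K) z0 * L K J x) * y
          + facSO θm (wt inv J, 0) m • (x * (nm (inv K) z0 * L K J y)) := by
      intro K
      have hdeg : ((wt inv K + wt inv J, 0) : W n × W n) + (wt inv (inv K), 0)
          = (wt inv J, 0) := by
        refine Prod.ext_iff.mpr ⟨?_, ?_⟩
        · simp only [Prod.fst_add]
          rw [wt_inv_inv inv hinv]; abel
        · simp only [Prod.snd_add]; abel
      rw [hLeib K J m x y hx1, mul_add, ← mul_assoc, mul_smul_comm,
        ← mul_assoc, hx2 (inv K), smul_mul_assoc, mul_assoc, smul_smul,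
        ← facSO_add_left, hdeg, mul_assoc]
    rw [Finset.sum_congr rfl fun K _ => hterm K, Finset.sum_add_distrib,
      ← Finset.sum_mul, ← Finset.smul_sum, ← Finset.mul_sum]
  -- value of rhoT on the generators
  have hρgen : ∀ (J S T : Idx n), rhoT J (nm S T)
      = ((if J = inv S then (1:ℂ) else 0) * (if z0 = T then 1 else 0)) • (1:A)
        - lam θm J S • (nm S z0 * nm J T) := by
    intro J S T
    rw [hrho_apply]
    simp only [hLval, mul_sub, mul_smul_comm, Finset.sum_sub_distrib]
    congr 1
    · rw [← Finset.smul_sum]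
      have h1 : ∑ K, nm (inv K) z0 * nm K T = if z0 = T then (1:A) else 0 := by
        have h := horth₁ z0 T; rwa [hz0] at h
      rw [h1]
      by_cases h : J = inv S <;> by_cases h2 : z0 = T <;>
        simp [h, h2]
    · rw [Finset.sum_eq_single (inv S)]
      · rw [if_pos (by rw [hinv]), one_smul, hinv,
          lam_inv_left inv θm hθ₁ hθ₂]
      · intro K _ hK
        rw [if_neg, zero_smul, smul_zero]
        intro hSK; exact hK (by rw [hSK, hinv])
      · intro h; exact absurd (Finset.mem_univ _) h
  have hll : ∀ P Q : Idx n, lam θm P Q * lam θm Q P = 1 :=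
    fun P Q => lam_mul_symm θm hθ₁ P Q
  have hDgen : ∀ I J S T : Idx n,
      rhoT I (rhoT J (nm S T)) - lam θm I J • rhoT J (rhoT I (nm S T))
        - L I J (nm S T) = 0 := by
    intro I J S T
    have hleibS : ∀ P Q R : Idx n, rhoT P (nm S z0 * nm Q R)
        = rhoT P (nm S z0) * nm Q R + lam θm P S • (nm S z0 * rhoT P (nm Q R)) := by
      intro P Q R
      rw [hρLeib P (wt inv S, wt inv z0) (nm S z0) (hGgen S z0) (nm Q R),
        facSO_wt inv θm hinv hθ₁ hθ₂]
    have e1 : (S = inv I) = (I = inv S) := by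
      apply propext; constructor <;> (intro h; rw [h, hinv])
    have e2 : (J = inv I) = (I = inv J) := by
      apply propext; constructor <;> (intro h; rw [h, hinv])
    rw [hρgen J S T, hρgen I S T]
    simp only [map_sub, map_smul, hρ1, smul_zero, zero_sub]
    rw [hleibS I J T, hleibS J I T, hρgen I S z0, hρgen J S z0,
      hρgen I J T, hρgen J I T, hLval]
    simp only [if_pos rfl, mul_one, e1, e2]
    have q1 : (if I = inv S then (1:ℂ) else 0) * lam θm J S
        = (if I = inv S then (1:ℂ) else 0) * lam θm I J := by
      split_ifs with h
      · rw [one_mul, one_mul, show S = inv I by rw [h, hinv],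
          lam_inv_right inv θm hθ₁ hθ₂]
      · rw [zero_mul, zero_mul]
    have q2 : (if J = inv S then (1:ℂ) else 0) * (lam θm I J * lam θm I S)
        = (if J = inv S then (1:ℂ) else 0) := by
      split_ifs with h
      · rw [one_mul, show S = inv J by rw [h, hinv],
          lam_inv_right inv θm hθ₁ hθ₂ J I]
        exact hll I J
      · rw [zero_mul]
    have q3 : (if I = inv J then (1:ℂ) else 0) * lam θm I J
        = (if I = inv J then (1:ℂ) else 0) := by
      split_ifs with h
      · rw [one_mul, h, lam_inv_left inv θm hθ₁ hθ₂, lam_self θm hθ₁]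
      · rw [zero_mul]
    simp only [if_true, sub_mul, mul_sub, smul_mul_assoc, mul_smul_comm,
      mul_assoc, one_mul, mul_one, smul_smul, smul_sub, neg_sub]
    match_scalars
    all_goals try ring
    · linear_combination -q1
    · linear_combination (-(lam θm I S * lam θm J S)) * hll I J
    · split_ifs with h h2
      · have hone : lam θm I J = 1 := by
          rw [h, lam_inv_left inv θm hθ₁ hθ₂, lam_self θm hθ₁]
        rw [hone]; ring
      all_goals ring
    · linear_combination q2
  -- Leibniz rule for the curvature-defect operator
  have hDLeib : ∀ (I J : Idx n) (m : W n × W n) (x : A), Mon inv nm m x → ∀ y : A,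
      rhoT I (rhoT J (x * y)) - lam θm I J • rhoT J (rhoT I (x * y)) - L I J (x * y)
      = (rhoT I (rhoT J x) - lam θm I J • rhoT J (rhoT I x) - L I J x) * y
        + facSO θm (wt inv I + wt inv J, 0) m •
          (x * (rhoT I (rhoT J y) - lam θm I J • rhoT J (rhoT I y) - L I J y)) := by
    intro I J m x hx y
    have hxG := hMonG hx
    have hfI : facSO θm (wt inv I, 0) (m + (wt inv J, 0))
        = facSO θm (wt inv I, 0) m * lam θm I J := by
      rw [facSO_add_right, facSO_wt inv θm hinv hθ₁ hθ₂]
    have hfJ : facSO θm (wt inv J, 0) (m + (wt inv I, 0))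
        = facSO θm (wt inv J, 0) m * lam θm J I := by
      rw [facSO_add_right, facSO_wt inv θm hinv hθ₁ hθ₂]
    have hfIJ : facSO θm (wt inv I + wt inv J, 0) m
        = facSO θm (wt inv I, 0) m * facSO θm (wt inv J, 0) m := by
      rw [show ((wt inv I + wt inv J, 0) : W n × W n)
          = (wt inv I, (0:W n)) + (wt inv J, (0:W n)) by
        rw [Prod.mk_add_mk, add_zero], facSO_add_left]
    rw [hρLeib J m x hxG y, map_add, map_smul,
      hρLeib I (m + (wt inv J, 0)) (rhoT J x) (hρG hx J) y,
      hρLeib I m x hxG (rhoT J y),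
      hρLeib I m x hxG y, map_add, map_smul,
      hρLeib J (m + (wt inv I, 0)) (rhoT I x) (hρG hx I) y,
      hρLeib J m x hxG (rhoT I y),
      hLeib I J m x y ((hGmem m x).mp hxG).1,
      hfI, hfJ, hfIJ]
    simp only [sub_mul, smul_mul_assoc, mul_sub, mul_smul_comm, smul_sub,
      smul_add, smul_smul]
    match_scalars
    all_goals try ring
    · linear_combination (-(facSO θm (wt inv J, (0 : W n)) m)) * hll I J
  -- the defect vanishes on all monomials
  have hDMon : ∀ (I J : Idx n) {m : W n × W n} {x : A}, Mon inv nm m x →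
      rhoT I (rhoT J x) - lam θm I J • rhoT J (rhoT I x) - L I J x = 0 := by
    intro I J m x h
    induction h with
    | one => rw [hρ1, hρ1, map_zero, map_zero, hL1, smul_zero]; abel
    | gen S T => exact hDgen I J S T
    | mul hx hy ihx ihy =>
      rename_i m₁ m₂ x₁ y₁
      rw [hDLeib I J m₁ x₁ hx y₁, ihx, ihy, zero_mul, mul_zero, smul_zero,
        add_zero]
  -- the defect vanishes everywhere
  have hDall : ∀ (I J : Idx n) (x : A),
      (rhoT I ∘ₗ rhoT J - lam θm I J • (rhoT J ∘ₗ rhoT I) - L I J) x = 0 := by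
    intro I J x
    have hfapp : ∀ z : A,
        (rhoT I ∘ₗ rhoT J - lam θm I J • (rhoT J ∘ₗ rhoT I) - L I J) z
        = rhoT I (rhoT J z) - lam θm I J • rhoT J (rhoT I z) - L I J z := by
      intro z
      simp [LinearMap.sub_apply, LinearMap.comp_apply, LinearMap.smul_apply]
    have hxspan : x ∈ Submodule.span ℂ
        ((Submonoid.closure {x : A | ∃ I J, x = nm I J} : Submonoid A) : Set A) := by
      rw [← Algebra.adjoin_eq_span (R := ℂ) (s := {x : A | ∃ I J, x = nm I J}), hgen]
      simp
    refine Submodule.span_induction ?_ ?_ ?_ ?_ hxspan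
    · intro z hz
      have hmon : ∃ m, Mon inv nm m z := by
        refine Submonoid.closure_induction ?_ ?_ ?_ hz
        · rintro w ⟨P, Q, rfl⟩; exact ⟨_, Mon.gen P Q⟩
        · exact ⟨0, Mon.one⟩
        · rintro a b _ _ ⟨m₁, h₁⟩ ⟨m₂, h₂⟩; exact ⟨_, Mon.mul h₁ h₂⟩
      obtain ⟨m, hm⟩ := hmon
      rw [hfapp]
      exact hDMon I J hm
    · exact map_zero _
    · intro a b _ _ ha hb
      rw [map_add, ha, hb, add_zero]
    · intro c a _ ha
      rw [map_smul, ha, smul_zero]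
  -- conclusion
  have hmain : ∀ I J, rhoT I ∘ₗ rhoT J - lam θm I J • (rhoT J ∘ₗ rhoT I) = L I J := by
    intro I J
    apply LinearMap.ext
    intro x
    have h := hDall I J x
    rw [LinearMap.sub_apply, sub_eq_zero] at h
    simpa using h
  refine ⟨hmain, ?_⟩
  intro I J
  rw [hY I J, hmain I J]
  abel


end Statement14
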